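/- Let A, B be d×d real symmetric positive semidefinite matrices with Ran(A) ⊆ Ran(B). Then the minimum of the function θ ↦ Tr(θ† A) + Tr(θ B) over all symmetric positive semidefinite θ with Ran(A) ⊆ Ran(θ) equals 2‖B^{1/2} A^{1/2}‖_*, and it is attained at θ* = B^{†/2} (B^{1/2} A B^{1/2})^{1/2} B^{†/2}. -/

import Mathlib

open Matrix

open scoped ComplexOrder

/-- The positive semidefinite square root of a positive semidefinite matrix
(the definition `Matrix.PosSemidef.sqrt` of the older Mathlib, since removed). -/
noncomputable def Matrix.PosSemidef.sqrt {n : Type*} [Fintype n] [DecidableEq n] {𝕜 : Type*} [RCLike 𝕜]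
    {A : Matrix n n 𝕜} (hA : A.PosSemidef) : Matrix n n 𝕜 :=
  hA.1.eigenvectorUnitary.1 * diagonal ((↑) ∘ (√·) ∘ hA.1.eigenvalues) *
    (star hA.1.eigenvectorUnitary : Matrix n n 𝕜)

/-- The four Penrose conditions characterizing the Moore–Penrose pseudoinverse `B` of `A`. -/
def IsMoorePenrose {d : ℕ} (A B : Matrix (Fin d) (Fin d) ℝ) : Prop :=
  A * B * A = A ∧ B * A * B = B ∧ (A * B)ᵀ = A * B ∧ (B * A)ᵀ = B * A

/-- The trace (nuclear) norm `‖M‖_* = Tr((Mᵀ M)^{1/2})`. -/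
noncomputable def traceNorm {d : ℕ} (M : Matrix (Fin d) (Fin d) ℝ) : ℝ :=
  (Matrix.posSemidef_conjTranspose_mul_self M).sqrt.trace

/-!
Write `θ = R²` with `R = θ^{1/2}`. Then `Tr(θ†A) + Tr(θB) = ‖R†A^{1/2}‖_F² + ‖RB^{1/2}‖_F²`, and
since `RR†` is the orthogonal projection onto `Ran θ ⊇ Ran A`, `(RB^{1/2})ᵀ(R†A^{1/2}) =
B^{1/2}A^{1/2}`. The lower bound is therefore the inequality `2‖YᵀX‖_* ≤ ‖X‖_F² + ‖Y‖_F²`: with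
the polar decomposition `YᵀX = W|YᵀX|`, `W` a partial isometry, `‖YᵀX‖_* = Tr((YW)ᵀX)
≤ (‖YW‖_F² + ‖X‖_F²)/2` and `‖YW‖_F ≤ ‖Y‖_F`.
For `θ*` one checks `θ* B θ* = A`, so both terms equal `Tr (B^{1/2}AB^{1/2})^{1/2}`, which is
`‖B^{1/2}A^{1/2}‖_*` because `(MMᵀ)^{1/2} = W(MᵀM)^{1/2}Wᵀ` has the same trace as `(MᵀM)^{1/2}`.
-/

open scoped MatrixOrder

namespace Matrix

namespace PosSemidef

lemma transpose_eq {n : Type*} {A : Matrix n n ℝ} (hA : A.PosSemidef) : Aᵀ = A :=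
  (isHermitian_iff_isSymm.mp hA.isHermitian).eq

variable {n 𝕜 : Type*} [Fintype n] [DecidableEq n] [RCLike 𝕜] {A B : Matrix n n 𝕜}

lemma sqrt_eq_cfcSqrt (hA : A.PosSemidef) : hA.sqrt = CFC.sqrt A := by
  rw [CFC.sqrt_eq_real_sqrt A hA.nonneg, cfcₙ_eq_cfc, hA.1.cfc_eq, IsHermitian.cfc,
    Unitary.conjStarAlgAut_apply]
  rfl

lemma posSemidef_sqrt (hA : A.PosSemidef) : hA.sqrt.PosSemidef := by
  rw [hA.sqrt_eq_cfcSqrt]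
  exact (CFC.sqrt_nonneg A).posSemidef

lemma sqrt_mul_self (hA : A.PosSemidef) : hA.sqrt * hA.sqrt = A := by
  rw [hA.sqrt_eq_cfcSqrt]
  exact CFC.sqrt_mul_sqrt_self A hA.nonneg

lemma eq_sqrt_of_mul_self_eq (hA : A.PosSemidef) (hB : B.PosSemidef) (h : A * A = B) :
    A = hB.sqrt := by
  rw [hB.sqrt_eq_cfcSqrt, eq_comm, CFC.sqrt_eq_iff B A hB.nonneg hA.nonneg, h]

end PosSemidef

lemma IsHermitian.mul_eq_self_iff {n 𝕜 : Type*} [Fintype n] [RCLike 𝕜] {P X : Matrix n n 𝕜}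
    (hP : P.IsHermitian) (hX : X.IsHermitian) : P * X = X ↔ X * P = X := by
  constructor <;> intro h <;>
    simpa only [conjTranspose_mul, hP.eq, hX.eq] using congrArg Matrix.conjTranspose h

lemma IsHermitian.trace_conjTranspose_mul_mul_self {n 𝕜 : Type*} [Fintype n] [RCLike 𝕜]
    {U V : Matrix n n 𝕜} (hU : U.IsHermitian) (hV : V.IsHermitian) :
    ((U * V)ᴴ * (U * V)).trace = (U * U * (V * V)).trace := by
  rw [conjTranspose_mul, hU.eq, hV.eq, Matrix.mul_assoc, trace_mul_comm]
  simp only [Matrix.mul_assoc]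

lemma mul_eq_self_of_conjTranspose_mul_self_mul_eq {m n 𝕜 : Type*} [Fintype m] [Fintype n]
    [RCLike 𝕜] {M : Matrix m n 𝕜} {Q : Matrix n n 𝕜} (hQ : Qᴴ = Q) (h : Mᴴ * M * Q = Mᴴ * M) :
    M * Q = M := by
  have h' : Q * (Mᴴ * M) = Mᴴ * M := by
    simpa only [conjTranspose_mul, conjTranspose_conjTranspose, hQ, mul_assoc] using
      congrArg conjTranspose h
  have hzero : (M - M * Q)ᴴ * (M - M * Q) = 0 := by
    calc (M - M * Q)ᴴ * (M - M * Q)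
        = Mᴴ * M - Mᴴ * M * Q - Q * (Mᴴ * M) + Q * (Mᴴ * M * Q) := by
          simp only [conjTranspose_sub, conjTranspose_mul, hQ, Matrix.sub_mul, Matrix.mul_sub,
            Matrix.mul_assoc]
          abel
      _ = 0 := by rw [h, h']; abel
  exact (sub_eq_zero.mp (conjTranspose_mul_self_eq_zero.mp hzero)).symm

lemma mul_eq_of_range_le {l m n R : Type*} [Fintype l] [Fintype m] [Fintype n] [CommRing R]
    {A : Matrix l m R} {B : Matrix l n R} {P : Matrix l l R}
    (hAB : LinearMap.range A.mulVecLin ≤ LinearMap.range B.mulVecLin) (hPB : P * B = B) :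
    P * A = A := by
  rw [ext_iff_mulVec]
  intro x
  obtain ⟨y, hy⟩ := hAB (LinearMap.mem_range_self _ x)
  simp only [mulVecLin_apply] at hy
  rw [← mulVec_mulVec, ← hy, mulVec_mulVec, hPB]

end Matrix

namespace IsMoorePenrose

variable {d : ℕ} {A X Y : Matrix (Fin d) (Fin d) ℝ}

lemma transpose (h : IsMoorePenrose A X) : IsMoorePenrose Aᵀ Xᵀ := by
  obtain ⟨h₁, h₂, h₃, h₄⟩ := h
  refine ⟨?_, ?_, ?_, ?_⟩
  · rw [← transpose_mul, ← transpose_mul, ← Matrix.mul_assoc, h₁]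
  · rw [← transpose_mul, ← transpose_mul, ← Matrix.mul_assoc, h₂]
  · rw [← transpose_mul, h₄, h₄]
  · rw [← transpose_mul, h₃, h₃]

lemma mul_eq_mul (hX : IsMoorePenrose A X) (hY : IsMoorePenrose A Y) : A * X = A * Y :=
  calc A * X = (A * Y * A * X)ᵀ := by rw [hY.1, hX.2.2.1]
    _ = (A * X)ᵀ * (A * Y)ᵀ := by rw [← transpose_mul, Matrix.mul_assoc (A * Y)]
    _ = A * Y := by rw [hX.2.2.1, hY.2.2.1, ← Matrix.mul_assoc, hX.1]

lemma unique (hX : IsMoorePenrose A X) (hY : IsMoorePenrose A Y) : X = Y := by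
  have hXA : X * A = Y * A := by
    simpa only [← transpose_mul, transpose_inj] using hX.transpose.mul_eq_mul hY.transpose
  calc X = X * A * X := hX.2.1.symm
    _ = Y * (A * Y) := by rw [hXA, Matrix.mul_assoc, hX.mul_eq_mul hY]
    _ = Y := by rw [← Matrix.mul_assoc, hY.2.1]

lemma isHermitian_mul (h : IsMoorePenrose A X) : (A * X).IsHermitian :=
  isHermitian_iff_isSymm.mpr h.2.2.1

lemma trace_mul_eq_of_mul_mul_eq {B C : Matrix (Fin d) (Fin d) ℝ} (h : IsMoorePenrose A X)
    (hC : A * B * A = C) : (X * C).trace = (A * B).trace := by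
  rw [← hC, ← Matrix.mul_assoc, trace_mul_comm, ← Matrix.mul_assoc, ← Matrix.mul_assoc, h.1]

lemma commute (h : IsMoorePenrose A X) (hA : Aᵀ = A) (hX : Xᵀ = X) : Commute A X := by
  rw [commute_iff_eq, ← h.2.2.1, transpose_mul, hA, hX]

lemma mul_self (h : IsMoorePenrose A X) (hc : Commute A X) : IsMoorePenrose (A * A) (X * X) := by
  obtain ⟨h₁, h₂, h₃, h₄⟩ := h
  have hAX : A * A * (X * X) = A * X := by
    rw [Matrix.mul_assoc, ← Matrix.mul_assoc A X X, hc.eq, h₂, hc.eq]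
  have hXA : X * X * (A * A) = X * A := by
    rw [Matrix.mul_assoc, ← Matrix.mul_assoc X A A, ← hc.eq, h₁, hc.eq]
  refine ⟨?_, ?_, ?_, ?_⟩
  · rw [hAX, ← Matrix.mul_assoc, h₁]
  · rw [hXA, ← Matrix.mul_assoc, h₂]
  · rw [hAX, h₃]
  · rw [hXA, h₄]

end IsMoorePenrose

lemma exists_isMoorePenrose {d : ℕ} {S : Matrix (Fin d) (Fin d) ℝ} (hS : S.PosSemidef) :
    ∃ T : Matrix (Fin d) (Fin d) ℝ, T.PosSemidef ∧ IsMoorePenrose S T := by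
  have hsa : IsSelfAdjoint S := hS.isHermitian.isSelfAdjoint
  have hmul : ∀ f g : ℝ → ℝ, cfc f S * cfc g S = cfc (fun x => f x * g x) S := fun f g =>
    (cfc_mul f g S ((Set.toFinite _).continuousOn f) ((Set.toFinite _).continuousOn g)).symm
  have hsymm : ∀ f : ℝ → ℝ, (cfc f S)ᵀ = cfc f S := fun f => by
    rw [← conjTranspose_eq_transpose_of_trivial]; exact IsSelfAdjoint.cfc
  -- The Penrose identities hold pointwise on the spectrum, at `0` because `0⁻¹ = 0`.
  set T := cfc (·⁻¹ : ℝ → ℝ) S with hT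
  refine ⟨T, (cfc_nonneg fun x hx => inv_nonneg.mpr ?_).posSemidef, ?_⟩
  · exact spectrum_nonneg_of_nonneg hS.nonneg hx
  · rw [← cfc_id' ℝ S, hT]
    refine ⟨?_, ?_, ?_, ?_⟩ <;> simp only [hmul, hsymm]
    all_goals congr 1; funext x; by_cases hx : x = 0 <;> field_simp [hx]

lemma IsMoorePenrose.sqrt {d : ℕ} {S T : Matrix (Fin d) (Fin d) ℝ} (hS : S.PosSemidef)
    (hT : T.PosSemidef) (h : IsMoorePenrose S T) : IsMoorePenrose hS.sqrt hT.sqrt := by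
  obtain ⟨U, hU, hmp⟩ := exists_isMoorePenrose hS.posSemidef_sqrt
  have hc := hmp.commute hS.posSemidef_sqrt.transpose_eq hU.transpose_eq
  have hTU : T = U * U := h.unique (hS.sqrt_mul_self ▸ hmp.mul_self hc)
  rwa [← hU.eq_sqrt_of_mul_self_eq hT hTU.symm]

section TraceInequalities

variable {m n : Type*} [Fintype m] [Fintype n]

lemma two_mul_trace_conjTranspose_mul_le (G X : Matrix m n ℝ) :
    2 * (Gᴴ * X).trace ≤ (Gᴴ * G).trace + (Xᴴ * X).trace := by
  have hswap : (Xᴴ * G).trace = (Gᴴ * X).trace := by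
    rw [← conjTranspose_conjTranspose X, ← conjTranspose_mul, trace_conjTranspose, star_trivial,
      conjTranspose_conjTranspose]
  have hnonneg := (posSemidef_conjTranspose_mul_self (G - X)).trace_nonneg
  simp only [conjTranspose_sub, Matrix.sub_mul, Matrix.mul_sub, trace_sub] at hnonneg
  linarith

lemma trace_conjTranspose_mul_self_mul_le [DecidableEq n] {W : Matrix n n ℝ}
    (hW : W * Wᴴ * W = W) (Y : Matrix m n ℝ) :
    ((Y * W)ᴴ * (Y * W)).trace ≤ (Yᴴ * Y).trace := by
  -- `N` is an orthogonal projection and the difference of the two sides is `Tr((YN)(YN)ᴴ)`.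
  set N := 1 - W * Wᴴ
  have hN : N * Nᴴ = N := by
    have hP : W * Wᴴ * (W * Wᴴ) = W * Wᴴ := by rw [← Matrix.mul_assoc, hW]
    simp only [N, conjTranspose_sub, conjTranspose_one, conjTranspose_mul,
      conjTranspose_conjTranspose, Matrix.sub_mul, Matrix.mul_sub, Matrix.one_mul, Matrix.mul_one,
      hP, sub_self, sub_zero]
  have hnonneg := (posSemidef_self_mul_conjTranspose (Y * N)).trace_nonneg
  rw [conjTranspose_mul, ← Matrix.mul_assoc, Matrix.mul_assoc Y, hN] at hnonneg
  rw [conjTranspose_mul, trace_mul_comm, trace_mul_comm Yᴴ]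
  simpa only [N, Matrix.mul_sub, Matrix.sub_mul, Matrix.mul_one, trace_sub, Matrix.mul_assoc,
    sub_nonneg] using hnonneg

end TraceInequalities

section TraceNorm

variable {d : ℕ}

lemma exists_polar_decomposition (M : Matrix (Fin d) (Fin d) ℝ) :
    ∃ W : Matrix (Fin d) (Fin d) ℝ, W * Wᴴ * W = W ∧
      Wᴴ * W * (posSemidef_conjTranspose_mul_self M).sqrt =
        (posSemidef_conjTranspose_mul_self M).sqrt ∧
      W * (posSemidef_conjTranspose_mul_self M).sqrt = M := by
  set hS := posSemidef_conjTranspose_mul_self M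
  set S := hS.sqrt
  have hSS : S * S = Mᴴ * M := hS.sqrt_mul_self
  obtain ⟨T, hT, hmp⟩ := exists_isMoorePenrose hS.posSemidef_sqrt
  have hc : T * S = S * T :=
    (hmp.commute hS.posSemidef_sqrt.transpose_eq hT.transpose_eq).eq.symm
  have hMST : M * (S * T) = M := by
    refine mul_eq_self_of_conjTranspose_mul_self_mul_eq
      hmp.isHermitian_mul.eq ?_
    rw [← hSS, ← hc, Matrix.mul_assoc S S, ← Matrix.mul_assoc S T S, hmp.1]
  have hWW : (M * T)ᴴ * (M * T) = S * T := by
    rw [conjTranspose_mul, hT.isHermitian.eq, Matrix.mul_assoc, ← Matrix.mul_assoc Mᴴ, ← hSS,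
      ← Matrix.mul_assoc, ← Matrix.mul_assoc, hc, hmp.1]
  -- `W = M |M|†`, and `WᴴW = |M| |M|†` is the projection onto `Ran |M|`.
  refine ⟨M * T, ?_, ?_, ?_⟩
  · rw [Matrix.mul_assoc, hWW, Matrix.mul_assoc, ← Matrix.mul_assoc T, hmp.2.1]
  · rw [hWW, hmp.1]
  · rw [Matrix.mul_assoc, hc, hMST]

lemma traceNorm_eq_trace_sqrt_mul_conjTranspose (M : Matrix (Fin d) (Fin d) ℝ) :
    traceNorm M = (posSemidef_self_mul_conjTranspose M).sqrt.trace := by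
  set hS := posSemidef_conjTranspose_mul_self M
  obtain ⟨W, -, hWWS, hWS⟩ := exists_polar_decomposition M
  have hK : W * hS.sqrt * Wᴴ = (posSemidef_self_mul_conjTranspose M).sqrt := by
    refine (hS.posSemidef_sqrt.mul_mul_conjTranspose_same W).eq_sqrt_of_mul_self_eq _ ?_
    calc W * hS.sqrt * Wᴴ * (W * hS.sqrt * Wᴴ) = W * hS.sqrt * (Wᴴ * W * hS.sqrt) * Wᴴ := by
          simp only [Matrix.mul_assoc]
      _ = W * hS.sqrt * (W * hS.sqrt)ᴴ := by
          rw [hWWS, conjTranspose_mul, hS.posSemidef_sqrt.isHermitian.eq, Matrix.mul_assoc (W * _)]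
      _ = M * Mᴴ := by rw [hWS]
  rw [← hK, trace_mul_cycle, hWWS]
  rfl

lemma two_mul_traceNorm_le (X Y : Matrix (Fin d) (Fin d) ℝ) :
    2 * traceNorm (Yᴴ * X) ≤ (Xᴴ * X).trace + (Yᴴ * Y).trace := by
  obtain ⟨W, hW, hWWS, hWS⟩ := exists_polar_decomposition (Yᴴ * X)
  have hGX : (Y * W)ᴴ * X = (posSemidef_conjTranspose_mul_self (Yᴴ * X)).sqrt :=
    calc (Y * W)ᴴ * X = Wᴴ * (Yᴴ * X) := by rw [conjTranspose_mul, Matrix.mul_assoc]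
      _ = Wᴴ * (W * (posSemidef_conjTranspose_mul_self (Yᴴ * X)).sqrt) := by rw [hWS]
      _ = _ := by rw [← Matrix.mul_assoc, hWWS]
  have hnorm : traceNorm (Yᴴ * X) = ((Y * W)ᴴ * X).trace := by rw [hGX]; rfl
  linarith [two_mul_trace_conjTranspose_mul_le (Y * W) X,
    trace_conjTranspose_mul_self_mul_le hW Y]

end TraceNorm

lemma two_mul_traceNorm_sqrt_mul_sqrt_le {d : ℕ} {A B θ θdag : Matrix (Fin d) (Fin d) ℝ}
    (hA : A.PosSemidef) (hB : B.PosSemidef) (hθ : θ.PosSemidef) (hmp : IsMoorePenrose θ θdag)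
    (hRan : LinearMap.range A.mulVecLin ≤ LinearMap.range θ.mulVecLin) :
    2 * traceNorm (hB.sqrt * hA.sqrt) ≤ (θdag * A).trace + (θ * B).trace := by
  set R := hθ.sqrt
  set Ah := hA.sqrt
  have hAh := hA.posSemidef_sqrt.isHermitian
  obtain ⟨Rd, hRd, hRmp⟩ := exists_isMoorePenrose hθ.posSemidef_sqrt
  have hc := hRmp.commute hθ.posSemidef_sqrt.transpose_eq hRd.transpose_eq
  have hθdag : θdag = Rd * Rd := hmp.unique (hθ.sqrt_mul_self ▸ hRmp.mul_self hc)
  have hQ : (R * Rd).IsHermitian := hRmp.isHermitian_mul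
  have hQA : R * Rd * A = A :=
    mul_eq_of_range_le hRan (by rw [← hθ.sqrt_mul_self, ← Matrix.mul_assoc, hRmp.1])
  have hQAh : R * Rd * Ah = Ah := by
    rw [hQ.mul_eq_self_iff hAh]
    refine mul_eq_self_of_conjTranspose_mul_self_mul_eq hQ.eq ?_
    rwa [hAh.eq, hA.sqrt_mul_self, ← hQ.mul_eq_self_iff hA.isHermitian]
  have hYX : (R * hB.sqrt)ᴴ * (Rd * Ah) = hB.sqrt * Ah := by
    rw [conjTranspose_mul, hB.posSemidef_sqrt.isHermitian.eq, hθ.posSemidef_sqrt.isHermitian.eq,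
      Matrix.mul_assoc, ← Matrix.mul_assoc R, hQAh]
  have hX : ((Rd * Ah)ᴴ * (Rd * Ah)).trace = (θdag * A).trace := by
    rw [hRd.isHermitian.trace_conjTranspose_mul_mul_self hAh, hA.sqrt_mul_self, hθdag]
  have hY : ((R * hB.sqrt)ᴴ * (R * hB.sqrt)).trace = (θ * B).trace := by
    rw [hθ.posSemidef_sqrt.isHermitian.trace_conjTranspose_mul_mul_self
      hB.posSemidef_sqrt.isHermitian, hθ.sqrt_mul_self, hB.sqrt_mul_self]
  simpa only [hYX, hX, hY] using two_mul_traceNorm_le (Rd * Ah) (R * hB.sqrt)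

section Optimizer

variable {d : ℕ} {A F Fd C : Matrix (Fin d) (Fin d) ℝ}

lemma IsMoorePenrose.mul_mul_mul_self_eq (h : IsMoorePenrose F Fd) (hc : Commute F Fd)
    (X : Matrix (Fin d) (Fin d) ℝ) : X * Fd * (F * F) = X * F := by
  rw [Matrix.mul_assoc X, ← Matrix.mul_assoc Fd, ← hc.eq, h.1]

lemma IsMoorePenrose.mul_mul_eq_of_mul_self_eq (h : IsMoorePenrose F Fd) (hc : Commute F Fd)
    (hC : C.IsHermitian) (hCC : C * C = F * A * F) : C * (F * Fd) = C := by
  refine mul_eq_self_of_conjTranspose_mul_self_mul_eq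
    h.isHermitian_mul.eq ?_
  rw [hC.eq, hCC, Matrix.mul_assoc (F * A), ← Matrix.mul_assoc F F, Matrix.mul_assoc F F, hc.eq,
    ← Matrix.mul_assoc F, h.1]

lemma IsMoorePenrose.optimizer_mul_mul_optimizer_eq (h : IsMoorePenrose F Fd)
    (hc : Commute F Fd) (hA : A.IsHermitian) (hC : C.IsHermitian) (hCC : C * C = F * A * F)
    (hPA : F * Fd * A = A) : Fd * C * Fd * (F * F) * (Fd * C * Fd) = A :=
  calc Fd * C * Fd * (F * F) * (Fd * C * Fd) = Fd * (C * (F * Fd) * C) * Fd := by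
        rw [h.mul_mul_mul_self_eq hc]; simp only [Matrix.mul_assoc]
    _ = Fd * F * A * (F * Fd) := by
        rw [h.mul_mul_eq_of_mul_self_eq hc hC hCC, hCC]; simp only [Matrix.mul_assoc]
    _ = A := by
        rw [← hc.eq, hPA, ← h.isHermitian_mul.mul_eq_self_iff hA, hPA]

lemma IsMoorePenrose.trace_optimizer_mul_eq (h : IsMoorePenrose F Fd) (hc : Commute F Fd)
    (hC : C.IsHermitian) (hCC : C * C = F * A * F) : (Fd * C * Fd * (F * F)).trace = C.trace := by
  rw [h.mul_mul_mul_self_eq hc, trace_mul_comm, ← Matrix.mul_assoc,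
    (h.isHermitian_mul.mul_eq_self_iff hC).mpr
      (h.mul_mul_eq_of_mul_self_eq hc hC hCC)]

lemma traceNorm_mul_sqrt_eq_trace_sqrt (hA : A.PosSemidef) (hF : F.IsHermitian)
    (hFAF : (F * A * F).PosSemidef) : traceNorm (F * hA.sqrt) = hFAF.sqrt.trace := by
  rw [traceNorm_eq_trace_sqrt_mul_conjTranspose,
    ← hFAF.posSemidef_sqrt.eq_sqrt_of_mul_self_eq (posSemidef_self_mul_conjTranspose _) ?_]
  rw [hFAF.sqrt_mul_self, conjTranspose_mul, hF.eq, hA.posSemidef_sqrt.isHermitian.eq,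
    Matrix.mul_assoc F hA.sqrt, ← Matrix.mul_assoc hA.sqrt, hA.sqrt_mul_self, Matrix.mul_assoc]

end Optimizer

lemma trace_add_trace_eq_two_mul_traceNorm {d : ℕ} {A B Bdag θdag : Matrix (Fin d) (Fin d) ℝ}
    (hA : A.PosSemidef) (hB : B.PosSemidef) (hBdagMP : IsMoorePenrose B Bdag)
    (hBdag : Bdag.PosSemidef) (hRanAB : LinearMap.range A.mulVecLin ≤ LinearMap.range B.mulVecLin)
    (hMid : (hB.sqrt * A * hB.sqrt).PosSemidef)
    (hmp : IsMoorePenrose (hBdag.sqrt * hMid.sqrt * hBdag.sqrt) θdag) :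
    (θdag * A).trace + ((hBdag.sqrt * hMid.sqrt * hBdag.sqrt) * B).trace
      = 2 * traceNorm (hB.sqrt * hA.sqrt) := by
  have hFmp : IsMoorePenrose hB.sqrt hBdag.sqrt := hBdagMP.sqrt hB hBdag
  have hc := hFmp.commute hB.posSemidef_sqrt.transpose_eq hBdag.posSemidef_sqrt.transpose_eq
  have hC := hMid.posSemidef_sqrt.isHermitian
  have hPA : hB.sqrt * hBdag.sqrt * A = A :=
    mul_eq_of_range_le hRanAB (by
      simpa only [hB.sqrt_mul_self] using hFmp.mul_mul_mul_self_eq hc hB.sqrt)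
  have hθBθ := hFmp.optimizer_mul_mul_optimizer_eq hc hA.isHermitian hC hMid.sqrt_mul_self hPA
  have htrace := hFmp.trace_optimizer_mul_eq hc hC hMid.sqrt_mul_self
  rw [hB.sqrt_mul_self] at hθBθ htrace
  rw [hmp.trace_mul_eq_of_mul_mul_eq hθBθ, htrace,
    traceNorm_mul_sqrt_eq_trace_sqrt hA hB.posSemidef_sqrt.isHermitian hMid]
  ring

/-- Let `A, B` be symmetric positive semidefinite with `Ran A ⊆ Ran B`.  Then the minimum of
`θ ↦ Tr(θ† A) + Tr(θ B)` over symmetric positive semidefinite `θ` with `Ran A ⊆ Ran θ`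
equals `2‖B^{1/2} A^{1/2}‖_*`, attained at `θ* = B^{†/2} (B^{1/2} A B^{1/2})^{1/2} B^{†/2}`. -/
theorem stmt1 {d : ℕ} (A B Bdag : Matrix (Fin d) (Fin d) ℝ)
    (hA : A.PosSemidef) (hB : B.PosSemidef)
    (hBdagMP : IsMoorePenrose B Bdag) (hBdag : Bdag.PosSemidef)
    (hRanAB : LinearMap.range A.mulVecLin ≤ LinearMap.range B.mulVecLin)
    (hMid : (hB.sqrt * A * hB.sqrt).PosSemidef) :
    (∀ θ θdag : Matrix (Fin d) (Fin d) ℝ, θ.PosSemidef → IsMoorePenrose θ θdag →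
        LinearMap.range A.mulVecLin ≤ LinearMap.range θ.mulVecLin →
        2 * traceNorm (hB.sqrt * hA.sqrt) ≤ (θdag * A).trace + (θ * B).trace) ∧
    (∀ θstardag : Matrix (Fin d) (Fin d) ℝ,
        IsMoorePenrose (hBdag.sqrt * hMid.sqrt * hBdag.sqrt) θstardag →
        (θstardag * A).trace + ((hBdag.sqrt * hMid.sqrt * hBdag.sqrt) * B).trace
          = 2 * traceNorm (hB.sqrt * hA.sqrt)) :=
  ⟨fun _ _ hθ hmp hRan => two_mul_traceNorm_sqrt_mul_sqrt_le hA hB hθ hmp hRan,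
    fun _ hmp => trace_add_trace_eq_two_mul_traceNorm hA hB hBdagMP hBdag hRanAB hMid hmp⟩
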